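/- arXiv:2404.13655 — 3 statements merged into one kernel-verified Lean document; each statement's English description precedes it below -/
import Mathlib

section
/- The map taking a pair (center feature, multiset of neighbor features) to the pair (s, Σ_{t ∈ N} t) is injective on inputs where all neighbor multisets are drawn from a countable set of features represented by one-hot encodings; more precisely, if features are standard basis vectors in ℝ^n, then (s, Σ_{t ∈ N} t) = (s', Σ_{t ∈ N'} t) implies s = s' and N = N' as multisets. -/
lemma oneHot_sum_count (n : ℕ) (M : Multiset (Fin n → ℝ))
    (hM : ∀ t ∈ M, ∃ i, t = Pi.single i (1 : ℝ)) (j : Fin n) :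
    M.sum j = M.count (Pi.single j 1) := by
  induction M using Multiset.induction with
  | empty => simp
  | cons t M ih =>
    obtain ⟨i, rfl⟩ := hM t (Multiset.mem_cons_self t M)
    have ih' := ih (fun u hu => hM u (Multiset.mem_cons_of_mem hu))
    rw [Multiset.sum_cons, Multiset.count_cons]
    by_cases hij : i = j
    · subst hij
      simp only [Pi.add_apply, ih', if_pos rfl]
      rw [Pi.single_eq_same (M := fun _ => ℝ)]
      push_cast
      ring
    · have hne : (Pi.single i 1 : Fin n → ℝ) ≠ Pi.single j 1 := by
        intro hcontra
        have := congrFun hcontra i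
        simp [Pi.single_eq_same, Pi.single_eq_of_ne hij] at this
      simp [Pi.add_apply, ih', Pi.single_eq_of_ne hij, Ne.symm hne, hne]
      exact Pi.single_eq_of_ne (M := fun _ => ℝ) (Ne.symm hij) 1

/-- On one-hot (standard basis) features, the map (s, N) ↦ (s, Σ_{t ∈ N} t) is injective:
if s, s' are standard basis vectors and N, N' are finite multisets of standard basis
vectors of ℝ^n, then (s, Σ_{t ∈ N} t) = (s', Σ_{t ∈ N'} t) implies s = s' and N = N'. -/
theorem oneHot_sum_injective (n : ℕ) (s s' : Fin n → ℝ)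
    (N N' : Multiset (Fin n → ℝ))
    (hs : ∃ i, s = Pi.single i 1) (hs' : ∃ i, s' = Pi.single i 1)
    (hN : ∀ t ∈ N, ∃ i, t = Pi.single i (1 : ℝ))
    (hN' : ∀ t ∈ N', ∃ i, t = Pi.single i (1 : ℝ))
    (h : (s, N.sum) = (s', N'.sum)) :
    s = s' ∧ N = N' := by
  obtain ⟨h1, h2⟩ := Prod.mk.injEq .. ▸ h
  refine ⟨h1, Multiset.ext.2 fun a => ?_⟩
  by_cases ha : ∃ j, a = Pi.single j (1 : ℝ)
  · obtain ⟨j, rfl⟩ := ha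
    have hcount : (N.count (Pi.single j 1) : ℝ) = N'.count (Pi.single j 1) := by
      rw [← oneHot_sum_count n N hN j, ← oneHot_sum_count n N' hN' j, h2]
    exact_mod_cast hcount
  · have hna : a ∉ N := fun hm => ha (hN a hm)
    have hna' : a ∉ N' := fun hm => ha (hN' a hm)
    simp [Multiset.count_eq_zero_of_notMem hna, Multiset.count_eq_zero_of_notMem hna']
end

section
/- Permutation invariance of the full SPGNN pipeline: suppose for each layer l = 1,...,L, the node representation map satisfies Z^{(l)}(P·A·Pᵀ, P·X) = P·Z^{(l)}(A, X) for every permutation matrix P (equivariance of graph convolution), and let H^{(l)} = concat(Z^{(l)}, MLP applied row-wise to Z^{(l)}). Then the graph representation Z_G = concat(sort-k(H^{(1)}), ..., sort-k(H^{(L)})) satisfies Z_{G} = Z_{G'} whenever G' is obtained from G by relabeling nodes via P, where sort-k uses descending sort on the last coordinate with lexicographic tie-breaking. -/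
open Matrix

def permMat {n : ℕ} (σ : Equiv.Perm (Fin n)) : Matrix (Fin n) (Fin n) ℝ :=
  fun i j => if σ i = j then 1 else 0

/-- Sort key: descending in last coordinate, lexicographic (descending)
tie-breaking on the remaining coordinates. -/
def rowKey {d : ℕ} (v : Fin (d + 1) → ℝ) : Lex (Fin (d + 1) → ℝ) :=
  toLex fun i => -(v (Fin.rev i))

def rowLE {d : ℕ} (a b : Fin (d + 1) → ℝ) : Prop := rowKey a ≤ rowKey b

noncomputable instance {d : ℕ} : DecidableRel (rowLE (d := d)) :=
  fun _ _ => Classical.dec _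

/-- sort-k: sort rows by `rowLE`, keep top-k, zero-pad if k > n. -/
noncomputable def sortK {n d : ℕ} (k : ℕ) (H : Matrix (Fin n) (Fin (d + 1)) ℝ) :
    List (Fin (d + 1) → ℝ) :=
  ((List.ofFn fun i => H i).insertionSort rowLE).take k ++
    List.replicate (k - n) (0 : Fin (d + 1) → ℝ)

lemma permMat_mul_apply {n m : ℕ} (σ : Equiv.Perm (Fin n))
    (M : Matrix (Fin n) (Fin m) ℝ) (i : Fin n) (j : Fin m) :
    (permMat σ * M) i j = M (σ i) j := by
  simp [Matrix.mul_apply, permMat]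

lemma rowKey_injective {d : ℕ} : Function.Injective (rowKey (d := d)) := by
  intro a b h
  funext j
  have := congrFun (congrArg ofLex h) (Fin.rev j)
  simpa [rowKey] using this

instance {d : ℕ} : IsTotal (Fin (d + 1) → ℝ) rowLE :=
  ⟨fun a b => by
    rcases @trichotomous _ _ (Pi.isTrichotomous_lex (β := fun _ : Fin (d + 1) => ℝ) (· < ·)
        (fun x y => x < y) wellFounded_lt)
        (ofLex (rowKey a)) (ofLex (rowKey b)) with h | h | h
    · exact Or.inl (le_of_lt (show rowKey a < rowKey b from h))
    · exact Or.inl (le_of_eq (show rowKey a = rowKey b from h))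
    · exact Or.inr (le_of_lt (show rowKey b < rowKey a from h))⟩

instance {d : ℕ} : IsTrans (Fin (d + 1) → ℝ) rowLE :=
  ⟨fun _ _ _ h1 h2 => le_trans h1 h2⟩

instance {d : ℕ} : IsAntisymm (Fin (d + 1) → ℝ) rowLE :=
  ⟨fun _ _ h1 h2 => rowKey_injective (le_antisymm h1 h2)⟩

/-- Permutation invariance of the full SPGNN pipeline: if every node
representation map Z^{(l)} is permutation-equivariant, and
H^{(l)} = concat(Z^{(l)}, MLP applied row-wise to Z^{(l)}), then the graph
representation Z_G = concat(sort-k(H^{(1)}), ..., sort-k(H^{(L)})) is identical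
for (A, X) and its relabeling (P·A·Pᵀ, P·X). -/
theorem spgnn_perm_invariant {n d₀ L : ℕ} (dim : Fin L → ℕ) (k : ℕ)
    (Z : ∀ l : Fin L, Matrix (Fin n) (Fin n) ℝ → Matrix (Fin n) (Fin d₀) ℝ →
      Matrix (Fin n) (Fin (dim l)) ℝ)
    (MLP : ∀ l : Fin L, (Fin (dim l) → ℝ) → ℝ)
    (hequiv : ∀ (l : Fin L) (σ : Equiv.Perm (Fin n))
      (A : Matrix (Fin n) (Fin n) ℝ) (X : Matrix (Fin n) (Fin d₀) ℝ),
      Z l (permMat σ * A * (permMat σ)ᵀ) (permMat σ * X) = permMat σ * Z l A X)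
    (A : Matrix (Fin n) (Fin n) ℝ) (X : Matrix (Fin n) (Fin d₀) ℝ)
    (σ : Equiv.Perm (Fin n))
    -- H^{(l)} for the original graph and for the relabeled graph
    (H H' : ∀ l : Fin L, Matrix (Fin n) (Fin (dim l + 1)) ℝ)
    (hH : ∀ l i, H l i = Fin.snoc (Z l A X i) (MLP l (Z l A X i)))
    (hH' : ∀ l i, H' l i =
      Fin.snoc (Z l (permMat σ * A * (permMat σ)ᵀ) (permMat σ * X) i)
        (MLP l (Z l (permMat σ * A * (permMat σ)ᵀ) (permMat σ * X) i))) :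
    ∀ l : Fin L, sortK k (H' l) = sortK k (H l) := by
  intro l
  have hrow : ∀ i, H' l i = H l (σ i) := by
    intro i
    rw [hH', hH, hequiv]
    have : (permMat σ * Z l A X) i = Z l A X (σ i) := by
      funext j; exact permMat_mul_apply σ (Z l A X) i j
    rw [this]
  have hfn : (List.ofFn fun i => H' l i) = List.ofFn ((fun i => H l i) ∘ σ) := by
    congr 1
    funext i
    exact hrow i
  have hperm : List.Perm (List.ofFn fun i => H' l i) (List.ofFn fun i => H l i) := by
    rw [hfn]; exact σ.ofFn_comp_perm _
  have hsortperm : List.Perm ((List.ofFn fun i => H' l i).insertionSort rowLE)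
      ((List.ofFn fun i => H l i).insertionSort rowLE) :=
    ((List.perm_insertionSort rowLE _).trans hperm).trans
      (List.perm_insertionSort rowLE _).symm
  have heq : ((List.ofFn fun i => H' l i).insertionSort rowLE) =
      ((List.ofFn fun i => H l i).insertionSort rowLE) :=
    List.Perm.eq_of_pairwise' (List.pairwise_insertionSort _ _)
      (List.pairwise_insertionSort _ _) hsortperm
  unfold sortK
  rw [heq]
end

section
/- Sum-pooling over multisets of bounded-size with features in a finite set F can be made injective by encoding: there exists an embedding e : F → ℝ (e.g., e(f_i) = (N+1)^{-i} for an enumeration f₁,...,f_m of F) such that for multisets S, S' over F of size at most N, Σ_{s∈S} e(s) = Σ_{s∈S'} e(s) implies S = S' as multisets. -/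
/-- Sum-pooling over bounded-size multisets with features in a finite set F can
be made injective by encoding: there exists an embedding e : F → ℝ such that for
multisets S, S' over F of size at most N, equal encoded sums imply S = S' as
multisets. -/
theorem sum_pool_injective_encoding (m N : ℕ) (hN : 0 < N) :
    ∃ e : Fin m → ℝ, ∀ S S' : Multiset (Fin m),
      Multiset.card S ≤ N → Multiset.card S' ≤ N →
      (S.map e).sum = (S'.map e).sum → S = S' := by
  refine ⟨fun i => ((N + 1 : ℝ)) ^ (i : ℕ), ?_⟩
  intro S S' hS hS' hsum
  have count_lt : ∀ (T : Multiset (Fin m)), Multiset.card T ≤ N →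
      ∀ i : Fin m, T.count i < N + 1 := by
    intro T hT i
    exact lt_of_le_of_lt (le_trans (Multiset.count_le_card i T) hT) (Nat.lt_succ_self N)
  have key : ∀ T : Multiset (Fin m),
      (T.map (fun i : Fin m => ((N + 1 : ℝ)) ^ (i : ℕ))).sum
        = ((∑ i : Fin m, T.count i * (N + 1) ^ (i : ℕ) : ℕ) : ℝ) := by
    intro T
    rw [Finset.sum_multiset_map_count,
      Finset.sum_subset (Finset.subset_univ T.toFinset)]
    · push_cast
      simp [nsmul_eq_mul]
    · intro x _ hx
      rw [Multiset.mem_toFinset] at hx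
      simp [Multiset.count_eq_zero_of_notMem hx]
  rw [key S, key S'] at hsum
  have hnat : (∑ i : Fin m, S.count i * (N + 1) ^ (i : ℕ))
      = ∑ i : Fin m, S'.count i * (N + 1) ^ (i : ℕ) := Nat.cast_injective hsum
  set c : Fin m → Fin (N + 1) := fun i => ⟨S.count i, count_lt S hS i⟩ with hc
  set c' : Fin m → Fin (N + 1) := fun i => ⟨S'.count i, count_lt S' hS' i⟩ with hc'
  have hcc : c = c' := by
    have h1 : (finFunctionFinEquiv c : ℕ) = (finFunctionFinEquiv c' : ℕ) := by
      rw [finFunctionFinEquiv_apply, finFunctionFinEquiv_apply]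
      exact hnat
    exact finFunctionFinEquiv.injective (Fin.val_injective h1)
  ext i
  have := congrFun hcc i
  simpa [hc, hc', Fin.ext_iff] using this
end
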